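/- If an output vertex v ∈ O∖I of a labelled open graph (G,I,O,λ) with gflow and |I| = |O| has a unique neighbour u ∈ V∖O, then λ(u) = XY. -/

import Mathlib

open Set

/-- The three measurement planes. -/
inductive MPlane | XY | XZ | YZ
deriving DecidableEq

/-- The odd neighbourhood of a set `K`: vertices with an odd number of neighbours in `K`. -/
def oddNbhd {V : Type*} (G : SimpleGraph V) (K : Set V) : Set V :=
  {u | Odd (K ∩ G.neighborSet u).ncard}

/-- `(g, prec)` is a gflow for the labelled open graph `(G, I, O, lam)`. -/
structure GFlow {V : Type*} (G : SimpleGraph V) (I O : Set V) (lam : V → MPlane)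
    (g : V → Set V) (prec : V → V → Prop) : Prop where
  irrefl : ∀ v, ¬ prec v v
  trans : ∀ u v w, prec u v → prec v w → prec u w
  noInput : ∀ v, v ∉ O → g v ∩ I = ∅
  g1 : ∀ v, v ∉ O → ∀ w ∈ g v, w ≠ v → prec v w
  g2 : ∀ v, v ∉ O → ∀ w ∈ oddNbhd G (g v), w ≠ v → prec v w
  gXY : ∀ v, v ∉ O → lam v = MPlane.XY → v ∉ g v ∧ v ∈ oddNbhd G (g v)
  gXZ : ∀ v, v ∉ O → lam v = MPlane.XZ → v ∈ g v ∧ v ∈ oddNbhd G (g v)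
  gYZ : ∀ v, v ∉ O → lam v = MPlane.YZ → v ∈ g v ∧ v ∉ oddNbhd G (g v)

/-! Over `ZMod 2`, let `M` be the matrix with rows indexed by the measured vertices `V ∖ O` and
columns by the non-inputs `V ∖ I` whose row at `w` is the adjacency row of `w` if `λ w = XY` and the
unit row of `w` otherwise. Applying `M` to the indicators of the correction sets `g w` of a gflow
yields a family that is triangular with respect to the gflow order with nonzero diagonal, so `M`
has full row rank. When `|I| = |O|` the matrix is square, hence injective. But the column of an
output `v ∉ I` vanishes unless `v` has an `XY`-measured neighbour outside `O`, and the only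
candidate is the unique neighbour `u`. -/

theorem linearIndependent_of_wellFounded_triangular {ι R : Type*} [Fintype ι] [Ring R]
    [NoZeroDivisors R] {r : ι → ι → Prop} (hr : WellFounded r) (y : ι → ι → R)
    (hdiag : ∀ i, y i i ≠ 0) (htri : ∀ i j, y i j ≠ 0 → j ≠ i → r i j) :
    LinearIndependent R y := by
  rw [Fintype.linearIndependent_iff]
  intro c hc
  by_contra! hc_ne
  obtain ⟨m, hm, hmin⟩ := hr.has_min {i | c i ≠ 0} hc_ne
  have hcm : ∑ i, c i * y i m = 0 := by simpa using congrFun hc m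
  rw [Finset.sum_eq_single_of_mem m (Finset.mem_univ m) fun i _ him => ?_] at hcm
  · exact mul_ne_zero hm (hdiag m) hcm
  · by_contra h
    exact hmin i (left_ne_zero_of_mul h) (htri i m (right_ne_zero_of_mul h) (Ne.symm him))

theorem SimpleGraph.sum_adj_mul_indicator_eq_oddNbhd_indicator {V : Type*} [Fintype V]
    (G : SimpleGraph V) [DecidableRel G.Adj] (K : Set V) (w : V) :
    ∑ z, (if G.Adj w z then 1 else 0) * K.indicator (1 : V → ZMod 2) z
      = (oddNbhd G K).indicator 1 w := by
  classical
  have hcard : ∑ z, (if G.Adj w z then 1 else 0) * K.indicator (1 : V → ZMod 2) z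
      = ((K ∩ G.neighborSet w).ncard : ZMod 2) := by
    rw [Set.ncard_eq_toFinset_card', Finset.card_eq_sum_ite (Finset.subset_univ _)]
    push_cast
    refine Finset.sum_congr rfl fun z _ => ?_
    by_cases hK : z ∈ K <;> by_cases hA : G.Adj w z <;> simp [hK, hA]
  rw [hcard, Set.indicator_apply]
  split_ifs with hodd
  · exact ZMod.natCast_eq_one_iff_odd.mpr hodd
  · exact ZMod.natCast_eq_zero_iff_even.mpr (Nat.not_odd_iff_even.mp hodd)

section FlowDemandMatrix

open Classical Matrix

variable {V : Type*} (G : SimpleGraph V) (I O : Set V) (lam : V → MPlane)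

/-- The flow-demand matrix of Mitosek and Backens, specialised to planar measurements. -/
noncomputable def flowDemandMatrix : Matrix ↥Oᶜ ↥Iᶜ (ZMod 2) :=
  fun w z => if lam w = .XY then (if G.Adj w z then 1 else 0) else (if (w : V) = z then 1 else 0)

theorem flowDemandMatrix_col_eq_zero {v : V} (hvI : v ∉ I) (hvO : v ∈ O)
    (hnbr : ∀ w ∉ O, G.Adj w v → lam w ≠ .XY) :
    (flowDemandMatrix G I O lam).col ⟨v, hvI⟩ = 0 := by
  ext w
  have hwv : (w : V) ≠ v := fun h => w.2 (h ▸ hvO)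
  simp only [Matrix.col_apply, flowDemandMatrix, Pi.zero_apply, hwv, if_false]
  split_ifs with hXY hadj
  · exact absurd hXY (hnbr w w.2 hadj)
  all_goals rfl

variable [Fintype V]

theorem flowDemandMatrix_mulVec_indicator {K : Set V} (hK : Disjoint K I) (w : ↥Oᶜ) :
    (flowDemandMatrix G I O lam *ᵥ fun z => K.indicator 1 z) w
      = (if lam w = .XY then oddNbhd G K else K).indicator 1 (w : V) := by
  have hsum (f : V → ZMod 2) :
      ∑ z : ↥Iᶜ, f z * K.indicator 1 z = ∑ z, f z * K.indicator 1 z := by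
    rw [Finset.sum_set_coe (f := fun z => f z * K.indicator 1 z)]
    refine Finset.sum_subset (Finset.subset_univ _) fun z _ hz => ?_
    rw [Set.indicator_of_notMem (hK.notMem_of_mem_right (by simpa using hz)), mul_zero]
  simp only [Matrix.mulVec, dotProduct, flowDemandMatrix]
  split_ifs with hXY
  · rw [hsum (fun z => if G.Adj w z then 1 else 0)]
    exact G.sum_adj_mul_indicator_eq_oddNbhd_indicator K w
  · rw [hsum (fun z => if (w : V) = z then 1 else 0)]
    simp

namespace GFlow

variable {G I O lam} {g : V → Set V} {prec : V → V → Prop}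

theorem linearIndependent_flowDemandMatrix_mulVec (hg : GFlow G I O lam g prec) :
    LinearIndependent (ZMod 2)
      fun w : ↥Oᶜ => flowDemandMatrix G I O lam *ᵥ fun z => (g w).indicator 1 z := by
  have hmulVec (w w' : ↥Oᶜ) := flowDemandMatrix_mulVec_indicator G I O lam
    (Set.disjoint_iff_inter_eq_empty.mpr (hg.noInput w w.2)) w'
  have : IsTrans ↥Oᶜ (fun a b => prec a b) := ⟨fun a b c => hg.trans a b c⟩
  have : Std.Irrefl (fun a b : ↥Oᶜ => prec a b) := ⟨fun a => hg.irrefl a⟩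
  refine linearIndependent_of_wellFounded_triangular
    (Finite.wellFounded_of_trans_of_irrefl fun a b : ↥Oᶜ => prec a b) _ (fun w => ?_)
    (fun w w' hne hww' => ?_)
  · rw [hmulVec]
    rcases hlam : lam w with _ | _ | _
    · simp [(hg.gXY w w.2 hlam).2]
    · simp [(hg.gXZ w w.2 hlam).1]
    · simp [(hg.gYZ w w.2 hlam).1]
  · have hne' : (w' : V) ≠ w := fun h => hww' (Subtype.ext h)
    rw [hmulVec] at hne
    have hmem := Set.mem_of_indicator_ne_zero hne
    split_ifs at hmem
    · exact hg.g2 w w.2 w' hmem hne'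
    · exact hg.g1 w w.2 w' hmem hne'

theorem surjective_mulVecLin_flowDemandMatrix (hg : GFlow G I O lam g prec) :
    Function.Surjective (flowDemandMatrix G I O lam).mulVecLin := by
  rw [← LinearMap.range_eq_top, eq_top_iff,
    ← hg.linearIndependent_flowDemandMatrix_mulVec.span_eq_top_of_card_eq_finrank' (by simp),
    Submodule.span_le]
  rintro _ ⟨w, rfl⟩
  exact ⟨_, rfl⟩

theorem injective_mulVecLin_flowDemandMatrix (hg : GFlow G I O lam g prec)
    (hcard : I.ncard = O.ncard) :
    Function.Injective (flowDemandMatrix G I O lam).mulVecLin := by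
  have hcompl (S : Set V) : Fintype.card ↥Sᶜ = Nat.card V - S.ncard := by
    rw [← Set.ncard_compl, Set.ncard_eq_toFinset_card', Set.toFinset_card]
  refine (LinearMap.injective_iff_surjective_of_finrank_eq_finrank ?_).mpr
    hg.surjective_mulVecLin_flowDemandMatrix
  simp only [Module.finrank_fintype_fun_eq_card, hcompl, hcard]

theorem exists_adj_XY_of_mem_output (hg : GFlow G I O lam g prec) (hcard : I.ncard = O.ncard)
    {v : V} (hvI : v ∉ I) (hvO : v ∈ O) : ∃ w ∉ O, G.Adj w v ∧ lam w = .XY := by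
  by_contra! hnbr
  have hcol := flowDemandMatrix_col_eq_zero G I O lam hvI hvO hnbr
  rw [← Matrix.mulVec_single_one, ← Matrix.mulVec_zero (flowDemandMatrix G I O lam)] at hcol
  exact Pi.single_ne_zero_iff.mpr one_ne_zero (hg.injective_mulVecLin_flowDemandMatrix hcard hcol)

end GFlow

end FlowDemandMatrix

theorem gflow_output_unique_neighbour_XY_general {V : Type*} [Fintype V]
    (G : SimpleGraph V) (I O : Set V) (lam : V → MPlane)
    (h : ∃ g prec, GFlow G I O lam g prec)
    (hcard : I.ncard = O.ncard)
    (v u : V) (hvO : v ∈ O) (hvI : v ∉ I)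
    (hN : G.neighborSet v = {u}) :
    lam u = MPlane.XY := by
  obtain ⟨g, prec, hg⟩ := h
  obtain ⟨w, -, hwv, hw⟩ := hg.exists_adj_XY_of_mem_output hcard hvI hvO
  have hwu : w ∈ G.neighborSet v := hwv.symm
  rw [hN, Set.mem_singleton_iff] at hwu
  exact hwu ▸ hw

/-- If an output `v ∈ O ∖ I` of a labelled open graph with gflow and
`|I| = |O|` has a unique neighbour `u ∈ V ∖ O`, then `λ(u) = XY`. -/
theorem gflow_output_unique_neighbour_XY {V : Type*} [Fintype V]
    (G : SimpleGraph V) (I O : Set V) (lam : V → MPlane)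
    (h : ∃ g prec, GFlow G I O lam g prec)
    (hcard : I.ncard = O.ncard)
    (v u : V) (hvO : v ∈ O) (hvI : v ∉ I)
    (hN : G.neighborSet v = {u}) (huO : u ∉ O) :
    lam u = MPlane.XY :=
  gflow_output_unique_neighbour_XY_general G I O lam h hcard v u hvO hvI hN
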